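/- For all integers k > s ≥ 3 and every ε > 0, there exists n₀ such that for all n ≥ n₀, f_{s,k}(n) ≥ n^{2−ε}; that is, a k-AP free set of n integers can contain n^{2−o(1)} nontrivial s-term arithmetic progressions. -/

import Mathlib

/-!
Pigeonholing the pairs `(x, y)` of `[0, m)^D × ([0, m)^D \ {0})` by their five moments
`(x ⬝ᵥ 1, x ⬝ᵥ x, y ⬝ᵥ 1, y ⬝ᵥ y, x ⬝ᵥ y) ∈ [0, D m²]⁵` leaves `m^(2D) / D^O(1)` pairs with equal
moments. The `i`-th point `x + i • y` of each of their `s`-term progressions lies on the hyperplane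
`t ⬝ᵥ 1 = h + i h'` and on the sphere `t ⬝ᵥ t = r + 2 i c + i² r'`. An `(s + 1)`-term progression
of such points would have a hyperplane index affine in its term index and taking at most `s` values,
hence constant; then a line would meet a sphere in three points. Reading vectors as base `2 s m`
digits is a Freiman isomorphism of order two on `[0, s m)^D`, so the union of these progressions
becomes a `k`-AP free set of at most `(s m)^D` integers with `m^(2D) / D^O(1)` nontrivial `s`-APs,
and points far to the right pad it to exactly `n` elements. Taking `D = ⌊log_{s m} n⌋` and
`m ^ ε ≥ 2 s²`, this is at least `n^(2 - ε)` for large `n`.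
-/

open Finset Pointwise

/-- The `k`-term arithmetic progression `{x, x+d, …, x+(k-1)d}` as a finite set. -/
def AP (k : ℕ) (x d : ℤ) : Finset ℤ := (Finset.range k).image (fun i : ℕ => x + (i : ℤ) * d)

/-- A set of integers is `k`-AP free if it contains no nontrivial `k`-term
arithmetic progression. -/
def APFree (k : ℕ) (A : Set ℤ) : Prop :=
  ∀ x d : ℤ, d ≠ 0 → ¬ (↑(AP k x d) : Set ℤ) ⊆ A

/-- `fAP s A` is the number of nontrivial `s`-term arithmetic progressions contained
in the finite set `A`. -/
noncomputable def fAP (s : ℕ) (A : Finset ℤ) : ℕ :=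
  Nat.card {P : Finset ℤ // P ⊆ A ∧ ∃ x d : ℤ, d ≠ 0 ∧ P = AP s x d}

/-- `fsk s k n` is the maximum number of nontrivial `s`-term arithmetic progressions
in a `k`-AP free set of `n` integers. -/
noncomputable def fsk (s k n : ℕ) : ℕ :=
  sSup {m | ∃ A : Finset ℤ, A.card = n ∧ APFree k ↑A ∧ fAP s A = m}

/-- `rk k n` is the size of the largest `k`-AP free subset of `{1, …, n}`. -/
noncomputable def rk (k n : ℕ) : ℕ :=
  sSup {m | ∃ A : Finset ℤ, A ⊆ Finset.Icc 1 (n : ℤ) ∧ APFree k ↑A ∧ A.card = m}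

/-- The partial sumset `A +_G B` along the edge set `E` of a bipartite graph. -/
def partialSumset (E : Finset (ℤ × ℤ)) : Finset ℤ := E.image (fun e => e.1 + e.2)

/-- `pathCount A B E a a'` is the number of (ordered) paths `(a, b, a'', b', a')` of
length four between `a` and `a'` in the bipartite graph with parts `A`, `B` and
edge set `E`. -/
def pathCount (A B : Finset ℤ) (E : Finset (ℤ × ℤ)) (a a' : ℤ) : ℕ :=
  ((B ×ˢ A ×ˢ B).filter (fun t =>
    (a, t.1) ∈ E ∧ (t.2.1, t.1) ∈ E ∧ (t.2.1, t.2.2) ∈ E ∧ (a', t.2.2) ∈ E)).card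

lemma mem_AP {k : ℕ} {x d z : ℤ} : z ∈ AP k x d ↔ ∃ i < k, x + (i : ℤ) * d = z := by
  simp [AP]

lemma AP_subset_AP {s k : ℕ} (h : s ≤ k) (x d : ℤ) : AP s x d ⊆ AP k x d :=
  image_subset_image (range_subset_range.2 h)

lemma AP_eq_AP_neg (k : ℕ) (x d : ℤ) : AP k x d = AP k (x + ((k : ℤ) - 1) * d) (-d) := by
  ext z
  simp only [mem_AP]
  constructor <;>
  · rintro ⟨i, hi, rfl⟩
    have hcast : ((k - 1 - i : ℕ) : ℤ) = k - 1 - i := by omega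
    exact ⟨k - 1 - i, by omega, by rw [hcast]; ring⟩

lemma le_of_mem_AP {s : ℕ} {x d z : ℤ} (hd : 0 ≤ d) (hz : z ∈ AP s x d) : x ≤ z := by
  obtain ⟨i, -, rfl⟩ := mem_AP.1 hz
  have : 0 ≤ (i : ℤ) * d := by positivity
  omega

lemma AP_inj {s : ℕ} (hs : 2 ≤ s) {x d x' d' : ℤ} (hd : 0 < d) (hd' : 0 < d')
    (h : AP s x d = AP s x' d') : x = x' ∧ d = d' := by
  have mem_zero : ∀ {x d : ℤ}, x ∈ AP s x d := mem_AP.2 ⟨0, by omega, by simp⟩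
  have mem_one : ∀ {x d : ℤ}, x + d ∈ AP s x d := mem_AP.2 ⟨1, by omega, by simp⟩
  have hx : x = x' := le_antisymm (le_of_mem_AP hd.le (h.symm ▸ mem_zero))
    (le_of_mem_AP hd'.le (h ▸ mem_zero))
  subst hx
  have step : ∀ {d d' : ℤ}, 0 < d → 0 < d' → AP s x d = AP s x d' → d' ≤ d := by
    intro d d' hd hd' h
    obtain ⟨i, -, hi⟩ := mem_AP.1 (h ▸ mem_one : x + d ∈ AP s x d')
    rcases i with _ | i
    · simp at hi; omega
    · push_cast at hi; nlinarith
  exact ⟨rfl, le_antisymm (step hd' hd h.symm) (step hd hd' h)⟩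

lemma apFree_iff_forall_pos {k : ℕ} {A : Set ℤ} :
    APFree k A ↔ ∀ x d : ℤ, 0 < d → ¬ (↑(AP k x d) : Set ℤ) ⊆ A := by
  refine ⟨fun hA x d hd => hA x d hd.ne', fun hA x d hd => ?_⟩
  rcases hd.lt_or_gt with hd | hd
  · rw [AP_eq_AP_neg]
    exact hA _ _ (neg_pos.2 hd)
  · exact hA x d hd

lemma APFree.mono {j k : ℕ} {A : Set ℤ} (hA : APFree j A) (hjk : j ≤ k) : APFree k A :=
  fun x d hd hsub => hA x d hd ((coe_subset.2 (AP_subset_AP hjk x d)).trans hsub)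

/-- A `z` beyond every `2 * b - a` can only be the last term of a progression in `insert z A`,
and then the two terms before it violate the bound. -/
lemma APFree.insert {k : ℕ} (hk : 3 ≤ k) {A : Finset ℤ} (hA : APFree k ↑A) {z : ℤ}
    (hz : ∀ a ∈ A, ∀ b ∈ A, 2 * b - a < z) : APFree k ↑(insert z A) := by
  obtain ⟨j, rfl⟩ : ∃ j, k = j + 3 := ⟨k - 3, by omega⟩
  rw [apFree_iff_forall_pos]
  intro x d hd hsub
  have mem : ∀ i < j + 3, x + (i : ℤ) * d = z ∨ x + (i : ℤ) * d ∈ A := fun i hi =>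
    mem_insert.1 (hsub (mem_coe.2 (mem_AP.2 ⟨i, hi, rfl⟩)))
  by_cases hzA : z ∈ AP (j + 3) x d
  · obtain ⟨i, hi, rfl⟩ := mem_AP.1 hzA
    have hle : (i : ℤ) * d ≤ ((j + 2 : ℕ) : ℤ) * d :=
      mul_le_mul_of_nonneg_right (by exact_mod_cast (by omega : i ≤ j + 2)) hd.le
    rcases mem (j + 2) (by omega) with hlast | hlast
    · have h1 := mem (j + 1) (by omega)
      have h0 := mem j (by omega)
      push_cast at hlast h1 h0
      rcases h1 with h1 | h1
      · linarith
      rcases h0 with h0 | h0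
      · linarith
      have := hz _ h0 _ h1
      linarith
    · have := hz _ hlast _ hlast
      linarith
  · refine hA x d hd.ne' fun y hy => ?_
    rcases mem_insert.1 (hsub hy) with rfl | hy'
    · exact absurd hy hzA
    · exact hy'

lemma exists_apFree_superset_card_eq {k : ℕ} (hk : 3 ≤ k) {A : Finset ℤ} (hA : APFree k ↑A)
    {n : ℕ} (hn : A.card ≤ n) : ∃ B, A ⊆ B ∧ B.card = n ∧ APFree k ↑B := by
  induction n, hn using Nat.le_induction with
  | base => exact ⟨A, Subset.rfl, rfl, hA⟩
  | succ n _ ih =>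
    obtain ⟨B, hAB, hB, hBfree⟩ := ih
    have habs : ∀ b ∈ B, |b| ≤ ∑ c ∈ B, |c| :=
      fun b hb => single_le_sum (fun c _ => abs_nonneg c) hb
    set z := 3 * ∑ c ∈ B, |c| + 1
    have hfar : ∀ a ∈ B, ∀ b ∈ B, 2 * b - a < z := fun a ha b hb => by
      have := habs a ha; have := habs b hb
      have := neg_abs_le a; have := le_abs_self b
      omega
    have hzB : z ∉ B := fun hzB => by have := hfar z hzB z hzB; omega
    exact ⟨insert z B, hAB.trans (subset_insert z B), by rw [card_insert_of_notMem hzB, hB],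
      hBfree.insert hk hfar⟩

lemma fAP_eq_ncard (s : ℕ) (A : Finset ℤ) :
    fAP s A = {P : Finset ℤ | P ⊆ A ∧ ∃ x d : ℤ, d ≠ 0 ∧ P = AP s x d}.ncard :=
  Nat.card_coe_set_eq _

lemma fAP_le_two_pow_card (s : ℕ) (A : Finset ℤ) : fAP s A ≤ 2 ^ A.card := by
  rw [fAP_eq_ncard, ← card_powerset, ← Set.ncard_coe_finset]
  exact Set.ncard_le_ncard fun P hP => mem_powerset.2 hP.1

lemma card_le_fAP {s : ℕ} (hs : 2 ≤ s) {A : Finset ℤ} {S : Finset (ℤ × ℤ)}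
    (hS : ∀ p ∈ S, 0 < p.2 ∧ AP s p.1 p.2 ⊆ A) : S.card ≤ fAP s A := by
  have hinj : Set.InjOn (fun p : ℤ × ℤ => AP s p.1 p.2) S := fun p hp q hq hpq => by
    obtain ⟨h1, h2⟩ := AP_inj hs (hS p hp).1 (hS q hq).1 hpq
    exact Prod.ext h1 h2
  rw [← card_image_of_injOn hinj, ← Set.ncard_coe_finset, fAP_eq_ncard]
  refine Set.ncard_le_ncard ?_ ((A.powerset.finite_toSet).subset fun P hP => mem_powerset.2 hP.1)
  intro P hP
  obtain ⟨p, hp, rfl⟩ := mem_image.1 hP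
  exact ⟨(hS p hp).2, p.1, p.2, (hS p hp).1.ne', rfl⟩

lemma fAP_le_fsk {s k : ℕ} {A : Finset ℤ} (hA : APFree k ↑A) : fAP s A ≤ fsk s k A.card :=
  le_csSup ⟨2 ^ A.card, by rintro _ ⟨B, hB, -, rfl⟩; exact hB ▸ fAP_le_two_pow_card s B⟩
    ⟨A, rfl, hA, rfl⟩

/-- A line `j ↦ L₀ + j L` through levels `h + i h'` with `i < s` must be constant, and then a
parabola `j ↦ Q₀ + 2 j Q₁ + j² Q₂` with values `r + 2 i c + i² r'` at the same levels must be
constant too. -/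
lemma eq_zero_of_forall_levels {s : ℕ} (hs : 2 ≤ s) {L₀ L Q₀ Q₁ Q₂ h h' r c r' : ℤ}
    {I : ℕ → ℕ} (hI : ∀ j ≤ s, I j < s) (hh' : h' ≠ 0)
    (hlin : ∀ j ≤ s, L₀ + j * L = h + I j * h')
    (hquad : ∀ j ≤ s, Q₀ + 2 * j * Q₁ + j ^ 2 * Q₂ = r + 2 * I j * c + (I j : ℤ) ^ 2 * r') :
    Q₂ = 0 := by
  have l0 := hlin 0 (by omega)
  have l1 := hlin 1 (by omega)
  have l2 := hlin 2 hs
  have ls := hlin s le_rfl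
  push_cast at l0 l1 l2
  have hIs : ((I s : ℤ) - I 0) = s * ((I 1 : ℤ) - I 0) :=
    mul_right_cancel₀ hh' (by linear_combination s * (l1 - l0) - (ls - l0))
  have hI1 : (I 1 : ℤ) = I 0 := by
    have := hI 0 (by omega); have := hI 1 (by omega); have := hI s le_rfl
    by_contra hne
    rcases lt_or_gt_of_ne hne with hlt | hlt <;> nlinarith
  have hL : L = 0 := by linear_combination l1 - l0 + h' * hI1
  have hI2 : (I 2 : ℤ) = I 0 := mul_right_cancel₀ hh' (by linear_combination l0 - l2 + 2 * hL)
  have q0 := hquad 0 (by omega)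
  have q1 := hquad 1 (by omega)
  have q2 := hquad 2 hs
  push_cast at q0 q1 q2
  rw [hI1] at q1
  rw [hI2] at q2
  linarith

lemma add_nsmul_dotProduct_one {ι R : Type*} [Fintype ι] [CommRing R] (u e : ι → R) (j : ℕ) :
    (u + j • e) ⬝ᵥ 1 = u ⬝ᵥ 1 + j * (e ⬝ᵥ 1) := by
  rw [add_dotProduct, smul_dotProduct, nsmul_eq_mul]

lemma add_nsmul_dotProduct_self {ι R : Type*} [Fintype ι] [CommRing R] (u e : ι → R) (j : ℕ) :
    (u + j • e) ⬝ᵥ (u + j • e) = u ⬝ᵥ u + 2 * j * (u ⬝ᵥ e) + j ^ 2 * (e ⬝ᵥ e) := by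
  simp only [add_dotProduct, dotProduct_add, smul_dotProduct, dotProduct_smul]
  rw [dotProduct_comm e u]
  simp only [nsmul_eq_mul]
  ring

def IsAPFree {G : Type*} [AddMonoid G] (k : ℕ) (A : Set G) : Prop :=
  ∀ u e : G, (∀ j < k, u + j • e ∈ A) → e = 0

section Lattice

variable {D : ℕ}

noncomputable def cube (w D : ℕ) : Finset (Fin D → ℤ) := Fintype.piFinset fun _ => Ico 0 (w : ℤ)

lemma mem_cube {w : ℕ} {x : Fin D → ℤ} : x ∈ cube w D ↔ ∀ a, 0 ≤ x a ∧ x a < w := by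
  simp [cube]

lemma card_cube (w D : ℕ) : (cube w D).card = w ^ D := by
  simp [cube, Fintype.card_piFinset]

lemma dotProduct_mem_Icc {w : ℤ} {x y : Fin D → ℤ} (hx : ∀ a, 0 ≤ x a ∧ x a ≤ w)
    (hy : ∀ a, 0 ≤ y a ∧ y a ≤ w) : x ⬝ᵥ y ∈ Icc 0 (D * w ^ 2) := by
  refine mem_Icc.2 ⟨sum_nonneg fun a _ => mul_nonneg (hx a).1 (hy a).1, ?_⟩
  calc x ⬝ᵥ y ≤ ∑ _a : Fin D, w ^ 2 :=
        sum_le_sum fun a _ => by nlinarith [hx a, hy a]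
    _ = D * w ^ 2 := by simp

lemma dotProduct_one_pos {w : ℕ} {x : Fin D → ℤ} (hx : x ∈ cube w D) (hx0 : x ≠ 0) :
    0 < x ⬝ᵥ 1 := by
  obtain ⟨a, ha⟩ := Function.ne_iff.1 hx0
  rw [dotProduct_one]
  exact sum_pos' (fun b _ => (mem_cube.1 hx b).1)
    ⟨a, mem_univ a, (mem_cube.1 hx a).1.lt_of_ne (Ne.symm ha)⟩

/-- The five quantities that, for `(x, y)`, determine the sum and the squared length of every
point `x + i • y` as functions of `i`. -/
def moments (p : (Fin D → ℤ) × (Fin D → ℤ)) : ℤ × ℤ × ℤ × ℤ × ℤ :=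
  (p.1 ⬝ᵥ 1, p.1 ⬝ᵥ p.1, p.2 ⬝ᵥ 1, p.2 ⬝ᵥ p.2, p.1 ⬝ᵥ p.2)

lemma exists_large_fiber_moments (m D g : ℕ)
    (hg : (D * m ^ 2 + 1) ^ 5 * g ≤ m ^ D * (m ^ D - 1)) :
    ∃ G ⊆ cube m D ×ˢ (cube m D).erase 0, g ≤ G.card ∧ ∃ σ, ∀ p ∈ G, moments p = σ := by
  set I := Icc (0 : ℤ) (D * m ^ 2)
  have hI : I.card = D * m ^ 2 + 1 := by
    simp only [I, Int.card_Icc, sub_zero]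
    exact_mod_cast Int.toNat_natCast _
  have hmaps : ∀ p ∈ cube m D ×ˢ (cube m D).erase 0, moments p ∈ I ×ˢ I ×ˢ I ×ˢ I ×ˢ I := by
    intro p hp
    have bound : ∀ x ∈ cube m D, ∀ a, 0 ≤ x a ∧ x a ≤ (m : ℤ) := fun x hx a =>
      ⟨(mem_cube.1 hx a).1, (mem_cube.1 hx a).2.le⟩
    have hx := bound _ (mem_product.1 hp).1
    have hy := bound _ (mem_of_mem_erase (mem_product.1 hp).2)
    have hone : ∀ a : Fin D, 0 ≤ (1 : Fin D → ℤ) a ∧ (1 : Fin D → ℤ) a ≤ m := fun a => by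
      have := mem_cube.1 (mem_product.1 hp).1 a
      simp only [Pi.one_apply]
      omega
    simp only [moments, mem_product]
    exact ⟨dotProduct_mem_Icc hx hone, dotProduct_mem_Icc hx hx, dotProduct_mem_Icc hy hone,
      dotProduct_mem_Icc hy hy, dotProduct_mem_Icc hx hy⟩
  have hcard : (I ×ˢ I ×ˢ I ×ˢ I ×ˢ I).card * g ≤ (cube m D ×ˢ (cube m D).erase 0).card := by
    simp only [card_product, hI]
    calc _ = (D * m ^ 2 + 1) ^ 5 * g := by ring
      _ ≤ m ^ D * (m ^ D - 1) := hg
      _ ≤ _ := Nat.mul_le_mul (card_cube m D).ge (card_cube m D ▸ pred_card_le_card_erase)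
  obtain ⟨σ, -, hσ⟩ := exists_le_card_fiber_of_mul_le_card_of_maps_to hmaps
    ⟨(0, 0, 0, 0, 0), by simp [I]; positivity⟩ hcard
  exact ⟨_, filter_subset _ _, hσ, σ, fun p hp => (mem_filter.1 hp).2⟩

def apUnion (s : ℕ) (G : Finset ((Fin D → ℤ) × (Fin D → ℤ))) : Finset (Fin D → ℤ) :=
  (G ×ˢ range s).image fun q => q.1.1 + q.2 • q.1.2

lemma mem_apUnion {s : ℕ} {G : Finset ((Fin D → ℤ) × (Fin D → ℤ))} {t : Fin D → ℤ} :
    t ∈ apUnion s G ↔ ∃ p ∈ G, ∃ i < s, p.1 + i • p.2 = t := by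
  simp [apUnion, and_assoc]

lemma apUnion_subset_cube {s m : ℕ} {G : Finset ((Fin D → ℤ) × (Fin D → ℤ))}
    (hG : ∀ p ∈ G, p.1 ∈ cube m D ∧ p.2 ∈ cube m D) : apUnion s G ⊆ cube (s * m) D := by
  intro t ht
  obtain ⟨p, hp, i, hi, rfl⟩ := mem_apUnion.1 ht
  refine mem_cube.2 fun a => ?_
  have hx := mem_cube.1 (hG p hp).1 a
  have hy := mem_cube.1 (hG p hp).2 a
  have hi' : (i : ℤ) + 1 ≤ s := by exact_mod_cast hi
  simp only [Pi.add_apply, Pi.smul_apply]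
  rw [nsmul_eq_mul]
  push_cast
  constructor <;> nlinarith

/-- All points of `apUnion s G` lie on the `s` hyperplanes `t ⬝ᵥ 1 = h + i h'` and, on the `i`-th
of them, on the sphere `t ⬝ᵥ t = r + 2 i c + i² r'`; a longer progression cannot do that. -/
lemma isAPFree_apUnion {s : ℕ} (hs : 2 ≤ s) {G : Finset ((Fin D → ℤ) × (Fin D → ℤ))}
    {h r h' r' c : ℤ} (hG : ∀ p ∈ G, moments p = (h, r, h', r', c)) (hh' : h' ≠ 0) :
    IsAPFree (s + 1) (apUnion s G : Set (Fin D → ℤ)) := by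
  intro u e hue
  have levels : ∀ j < s + 1, ∃ i < s, (u + j • e) ⬝ᵥ 1 = h + i * h' ∧
      (u + j • e) ⬝ᵥ (u + j • e) = r + 2 * i * c + (i : ℤ) ^ 2 * r' := by
    intro j hj
    obtain ⟨p, hp, i, hi, hpi⟩ := mem_apUnion.1 (hue j hj)
    have hmom := hG p hp
    simp only [moments, Prod.mk.injEq] at hmom
    obtain ⟨h1, h2, h3, h4, h5⟩ := hmom
    refine ⟨i, hi, ?_, ?_⟩
    · rw [← hpi, add_nsmul_dotProduct_one, h1, h3]
    · rw [← hpi, add_nsmul_dotProduct_self, h2, h4, h5]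
  choose! I hI hlin hquad using levels
  have hlin' : ∀ j ≤ s, u ⬝ᵥ 1 + j * (e ⬝ᵥ 1) = h + I j * h' := fun j hj => by
    rw [← add_nsmul_dotProduct_one, hlin j (by omega)]
  have hquad' : ∀ j ≤ s, u ⬝ᵥ u + 2 * j * (u ⬝ᵥ e) + j ^ 2 * (e ⬝ᵥ e) =
      r + 2 * I j * c + (I j : ℤ) ^ 2 * r' := fun j hj => by
    rw [← add_nsmul_dotProduct_self, hquad j (by omega)]
  exact dotProduct_self_eq_zero.1
    (eq_zero_of_forall_levels hs (fun j hj => hI j (by omega)) hh' hlin' hquad')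

end Lattice

section BaseEval

variable {D : ℕ}

def baseEval (M : ℤ) (x : Fin D → ℤ) : ℤ := x ⬝ᵥ fun a => M ^ (a : ℕ)

lemma baseEval_add (M : ℤ) (x y : Fin D → ℤ) :
    baseEval M (x + y) = baseEval M x + baseEval M y :=
  add_dotProduct x y _

lemma baseEval_sub (M : ℤ) (x y : Fin D → ℤ) :
    baseEval M (x - y) = baseEval M x - baseEval M y :=
  sub_dotProduct x y _

lemma baseEval_nsmul (M : ℤ) (i : ℕ) (x : Fin D → ℤ) :
    baseEval M (i • x) = i * baseEval M x := by
  rw [baseEval, smul_dotProduct, nsmul_eq_mul, baseEval]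

lemma baseEval_succ (M : ℤ) (x : Fin (D + 1) → ℤ) :
    baseEval M x = x 0 + M * baseEval M (Fin.tail x) := by
  simp only [baseEval, dotProduct, Fin.sum_univ_succ, Fin.val_zero, pow_zero, mul_one,
    Fin.val_succ, pow_succ, mul_sum, Fin.tail]
  congr 1
  exact sum_congr rfl fun a _ => by ring

lemma eq_zero_of_baseEval_eq_zero {M : ℤ} {x : Fin D → ℤ} (hx : ∀ a, |x a| < M)
    (h : baseEval M x = 0) : x = 0 := by
  induction D with
  | zero => exact Subsingleton.elim _ _
  | succ D ih =>
    rw [baseEval_succ] at h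
    have h0 : x 0 = 0 := Int.eq_zero_of_abs_lt_dvd ⟨-baseEval M (Fin.tail x), by linarith⟩ (hx 0)
    have hM : M ≠ 0 := (lt_of_le_of_lt (abs_nonneg _) (hx 0)).ne'
    have htail : Fin.tail x = 0 := ih (fun a => hx a.succ)
      (by simpa [h0, hM] using h)
    funext a
    exact Fin.cases h0 (fun b => congrFun htail b) a

lemma eq_of_baseEval_eq {M : ℤ} {x y : Fin D → ℤ} (hxy : ∀ a, |x a - y a| < M)
    (h : baseEval M x = baseEval M y) : x = y :=
  sub_eq_zero.1 (eq_zero_of_baseEval_eq_zero hxy (by rw [baseEval_sub, h, sub_self]))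

lemma baseEval_injOn {w : ℕ} {M : ℤ} (hM : w ≤ M) :
    Set.InjOn (baseEval M) (cube w D : Set (Fin D → ℤ)) :=
  fun x hx y hy h => eq_of_baseEval_eq (fun a => by
    have := mem_cube.1 hx a; have := mem_cube.1 hy a
    rw [abs_lt]; constructor <;> omega) h

lemma baseEval_pos {w : ℕ} {M : ℤ} (hM : w ≤ M) {x : Fin D → ℤ} (hx : x ∈ cube w D)
    (hx0 : x ≠ 0) : 0 < baseEval M x := by
  have hM0 : 0 ≤ M := (Int.natCast_nonneg w).trans hM
  have hnonneg : 0 ≤ baseEval M x := by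
    unfold baseEval dotProduct
    exact sum_nonneg fun a _ => mul_nonneg (mem_cube.1 hx a).1 (pow_nonneg hM0 _)
  refine hnonneg.lt_of_ne fun h => hx0 (eq_zero_of_baseEval_eq_zero (fun a => ?_) h.symm)
  have := mem_cube.1 hx a
  rw [abs_lt]; constructor <;> omega

/-- Base `M ≥ 2 w` evaluation is a Freiman isomorphism of order two on `cube w D`. -/
lemma add_eq_two_nsmul_of_baseEval {w : ℕ} {M : ℤ} (hM : 2 * w ≤ M) {x y z : Fin D → ℤ}
    (hx : x ∈ cube w D) (hy : y ∈ cube w D) (hz : z ∈ cube w D)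
    (h : baseEval M x + baseEval M z = 2 * baseEval M y) : x + z = 2 • y := by
  refine eq_of_baseEval_eq (M := M) (fun a => ?_) ?_
  · have := mem_cube.1 hx a; have := mem_cube.1 hy a; have := mem_cube.1 hz a
    simp only [Pi.add_apply, Pi.smul_apply]
    rw [nsmul_eq_mul, abs_lt]
    constructor <;> omega
  · rw [baseEval_add, baseEval_nsmul, h, Nat.cast_ofNat]

lemma apFree_image_baseEval {k w : ℕ} (hk : 2 ≤ k) {M : ℤ} (hM : 2 * w ≤ M)
    {A : Finset (Fin D → ℤ)} (hA : A ⊆ cube w D) (hfree : IsAPFree k (A : Set (Fin D → ℤ))) :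
    APFree k ↑(A.image (baseEval M)) := by
  intro x d hd hsub
  have lift : ∀ j < k, ∃ t ∈ A, baseEval M t = x + j * d := fun j hj =>
    mem_image.1 (hsub (mem_coe.2 (mem_AP.2 ⟨j, hj, rfl⟩)))
  choose! t ht hteq using lift
  have hrec : ∀ j, j + 2 < k → t j + t (j + 2) = 2 • t (j + 1) := fun j hj =>
    add_eq_two_nsmul_of_baseEval hM (hA (ht j (by omega))) (hA (ht (j + 1) (by omega)))
      (hA (ht (j + 2) hj)) (by rw [hteq j (by omega), hteq _ hj, hteq _ (by omega)]; push_cast; ring)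
  have hline : ∀ j < k, t j = t 0 + j • (t 1 - t 0) := by
    intro j
    induction j using Nat.strong_induction_on with
    | _ j ih =>
      match j with
      | 0 => simp
      | 1 => simp
      | j + 2 =>
        intro hj
        have hj' := hrec j hj
        rw [ih j (by omega) (by omega), ih (j + 1) (by omega) (by omega)] at hj'
        funext a
        have := congrFun hj' a
        simp only [Pi.add_apply, Pi.smul_apply, Pi.sub_apply] at this ⊢
        simp only [nsmul_eq_mul] at this ⊢
        push_cast at this ⊢
        linarith
  have h10 : t 1 - t 0 = 0 := hfree (t 0) (t 1 - t 0) fun j hj => hline j hj ▸ ht j hj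
  have := hteq 1 (by omega)
  rw [← sub_add_cancel (t 1) (t 0), h10, zero_add, hteq 0 (by omega)] at this
  exact hd (by simpa using this)

lemma AP_baseEval_subset_image {s : ℕ} (M : ℤ) {G : Finset ((Fin D → ℤ) × (Fin D → ℤ))}
    {p : (Fin D → ℤ) × (Fin D → ℤ)} (hp : p ∈ G) :
    AP s (baseEval M p.1) (baseEval M p.2) ⊆ (apUnion s G).image (baseEval M) := by
  intro z hz
  obtain ⟨i, hi, rfl⟩ := mem_AP.1 hz
  exact mem_image.2 ⟨p.1 + i • p.2, mem_apUnion.2 ⟨p, hp, i, hi, rfl⟩,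
    by rw [baseEval_add, baseEval_nsmul]⟩

end BaseEval

lemma le_fsk_of_mul_le {s k m D n g : ℕ} (hs : 3 ≤ s) (hk : s < k) (hn : (s * m) ^ D ≤ n)
    (hg : (D * m ^ 2 + 1) ^ 5 * g ≤ m ^ D * (m ^ D - 1)) : g ≤ fsk s k n := by
  obtain ⟨G, hGsub, hgG, ⟨h, r, h', r', c⟩, hσ⟩ := exists_large_fiber_moments m D g hg
  have hGcube : ∀ p ∈ G, p.1 ∈ cube m D ∧ p.2 ∈ cube m D ∧ p.2 ≠ 0 := fun p hp => by
    obtain ⟨h1, h2⟩ := mem_product.1 (hGsub hp)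
    exact ⟨h1, mem_of_mem_erase h2, ne_of_mem_erase h2⟩
  rcases G.eq_empty_or_nonempty with rfl | ⟨p₀, hp₀⟩
  · simp only [card_empty, nonpos_iff_eq_zero] at hgG
    exact hgG ▸ Nat.zero_le _
  have hh' : h' ≠ 0 := by
    have := congrArg (fun σ => σ.2.2.1) (hσ p₀ hp₀)
    simp only [moments] at this
    exact this ▸ (dotProduct_one_pos (hGcube p₀ hp₀).2.1 (hGcube p₀ hp₀).2.2).ne'
  -- base `2 s m` exceeds twice every coordinate of `apUnion s G ⊆ cube (s * m) D`
  set M : ℤ := 2 * (s * m : ℕ)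
  have hmM : (m : ℤ) ≤ M := by push_cast [M]; nlinarith [Int.natCast_nonneg m]
  have hcube := apUnion_subset_cube (s := s) fun p hp => (hGcube p hp).imp_right And.left
  set X := (apUnion s G).image (baseEval M)
  have hXfree : APFree k ↑X := (apFree_image_baseEval (by omega) le_rfl hcube
    (isAPFree_apUnion (by omega) hσ hh')).mono hk
  have hXcard : X.card ≤ n :=
    card_image_le.trans ((card_le_card hcube).trans (card_cube (s * m) D ▸ hn))
  obtain ⟨B, hXB, hB, hBfree⟩ := exists_apFree_superset_card_eq (by omega) hXfree hXcard
  have hinj : Set.InjOn (fun p : (Fin D → ℤ) × (Fin D → ℤ) => (baseEval M p.1, baseEval M p.2))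
      (G : Set _) :=
    fun p hp q hq hpq => Prod.ext
      (baseEval_injOn hmM (hGcube p hp).1 (hGcube q hq).1 (congrArg Prod.fst hpq))
      (baseEval_injOn hmM (hGcube p hp).2.1 (hGcube q hq).2.1 (congrArg Prod.snd hpq))
  have hAPs : ∀ q ∈ G.image fun p => (baseEval M p.1, baseEval M p.2),
      0 < q.2 ∧ AP s q.1 q.2 ⊆ B := by
    intro q hq
    obtain ⟨p, hp, rfl⟩ := mem_image.1 hq
    exact ⟨baseEval_pos hmM (hGcube p hp).2.1 (hGcube p hp).2.2,
      (AP_baseEval_subset_image M hp).trans hXB⟩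
  calc g ≤ G.card := hgG
    _ = (G.image fun p => (baseEval M p.1, baseEval M p.2)).card := (card_image_of_injOn hinj).symm
    _ ≤ fAP s B := card_le_fAP (by omega) hAPs
    _ ≤ fsk s k n := hB ▸ fAP_le_fsk hBfree

lemma eventually_mul_pow_le_two_pow (C k : ℕ) : ∀ᶠ D : ℕ in Filter.atTop, C * D ^ k ≤ 2 ^ D := by
  filter_upwards [(tendsto_pow_const_div_const_pow_of_one_lt k one_lt_two).eventually
    (gt_mem_nhds (by positivity : (0 : ℝ) < 1 / (C + 1)))] with D hD
  rw [div_lt_div_iff₀ (by positivity) (by positivity)] at hD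
  have : (C : ℝ) * D ^ k ≤ 2 ^ D := by nlinarith [pow_nonneg (Nat.cast_nonneg (α := ℝ) D) k]
  exact_mod_cast this

/-- With `N = s m`: `n < N ^ (D + 1)` and `m ^ ε ≥ 2 s²` turn the loss `N ^ (ε (D + 1))` into at
least `(2 s²) ^ D`, which cancels the surplus `s ^ (2 D)` of `N ^ (2 D)` over `m ^ (2 D)`. -/
lemma rpow_two_sub_le {s m n ε : ℝ} {D : ℕ} (hs : 1 ≤ s) (hm : 1 ≤ m) (hε : 0 ≤ ε)
    (hε2 : ε ≤ 2) (hn0 : 0 ≤ n) (hn : n ≤ (s * m) ^ (D + 1)) (hmε : 2 * s ^ 2 ≤ m ^ ε) :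
    n ^ (2 - ε) ≤ (s * m) ^ 2 * (m ^ D) ^ 2 / 2 ^ D := by
  set X := (s * m) ^ (D + 1)
  have hsm : m ≤ s * m := le_mul_of_one_le_left (by linarith) hs
  have hX : 0 < X := by positivity
  have hloss : (2 * s ^ 2) ^ D ≤ X ^ ε :=
    calc (2 * s ^ 2) ^ D ≤ (m ^ ε) ^ D := pow_le_pow_left₀ (by positivity) hmε D
      _ = (m ^ D) ^ ε := Real.rpow_pow_comm (by linarith) ε D
      _ ≤ X ^ ε := Real.rpow_le_rpow (by positivity)
          ((pow_le_pow_left₀ (by linarith) hsm D).trans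
            (pow_le_pow_right₀ (by linarith) (Nat.le_succ D))) hε
  calc n ^ (2 - ε) ≤ X ^ (2 - ε) := Real.rpow_le_rpow hn0 hn (by linarith)
    _ = X ^ 2 / X ^ ε := by rw [Real.rpow_sub hX, Real.rpow_two]
    _ ≤ X ^ 2 / (2 * s ^ 2) ^ D := div_le_div_of_nonneg_left (by positivity) (by positivity) hloss
    _ = (s * m) ^ 2 * (m ^ D) ^ 2 / 2 ^ D := by
      rw [mul_pow 2, ← pow_mul]
      field_simp
      ring

lemma mul_ceil_le_mul_pred {b P : ℕ} {y : ℝ} (hy : 0 ≤ y) (hP : 2 ≤ P)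
    (hby : 4 * b * y ≤ P ^ 2) (hb : 4 * b ≤ P ^ 2) : b * ⌈y⌉₊ ≤ P * (P - 1) := by
  have hceil : (b : ℝ) * ⌈y⌉₊ ≤ b * (y + 1) :=
    mul_le_mul_of_nonneg_left (Nat.ceil_lt_add_one hy).le (Nat.cast_nonneg b)
  have hP' : (2 : ℝ) ≤ P := by exact_mod_cast hP
  have hb' : (4 * b : ℝ) ≤ P ^ 2 := by exact_mod_cast hb
  rw [← Nat.cast_le (α := ℝ)]
  push_cast [Nat.cast_sub (by omega : 1 ≤ P)]
  nlinarith

lemma mul_ceil_rpow_le {s m n D : ℕ} {δ : ℝ} (hs : 1 ≤ s) (hm : 2 ≤ m) (hD : 1 ≤ D)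
    (hδ : 0 ≤ δ) (hδ2 : δ ≤ 2) (hmδ : 2 * (s : ℝ) ^ 2 ≤ (m : ℝ) ^ δ)
    (hpoly : 4 * (D * m ^ 2 + 1) ^ 5 * (s * m) ^ 2 ≤ 2 ^ D) (hn : n < (s * m) ^ (D + 1)) :
    (D * m ^ 2 + 1) ^ 5 * ⌈(n : ℝ) ^ (2 - δ)⌉₊ ≤ m ^ D * (m ^ D - 1) := by
  have h2m : 2 ^ D ≤ m ^ D := Nat.pow_le_pow_left hm D
  have hmD : 2 ≤ m ^ D := (Nat.le_self_pow (by omega) 2).trans h2m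
  have hbound := rpow_two_sub_le (s := s) (m := m) (n := n) (D := D) (by exact_mod_cast hs)
    (by exact_mod_cast (by omega : 1 ≤ m)) hδ hδ2 (Nat.cast_nonneg n)
    (by exact_mod_cast hn.le) hmδ
  have hpoly' : (4 * (D * m ^ 2 + 1) ^ 5 * (s * m) ^ 2 : ℝ) ≤ 2 ^ D := by exact_mod_cast hpoly
  refine mul_ceil_le_mul_pred (by positivity) hmD ?_ ?_
  · push_cast
    calc 4 * ((D : ℝ) * m ^ 2 + 1) ^ 5 * (n : ℝ) ^ (2 - δ)
        ≤ 4 * ((D : ℝ) * m ^ 2 + 1) ^ 5 * ((s * m) ^ 2 * (m ^ D) ^ 2 / 2 ^ D) := by gcongr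
      _ = 4 * ((D : ℝ) * m ^ 2 + 1) ^ 5 * (s * m) ^ 2 * (m ^ D) ^ 2 / 2 ^ D := by ring
      _ ≤ 2 ^ D * (m ^ D) ^ 2 / 2 ^ D := by gcongr
      _ = ((m : ℝ) ^ D) ^ 2 := by field_simp
  · calc 4 * (D * m ^ 2 + 1) ^ 5 ≤ 2 ^ D :=
        (Nat.le_mul_of_pos_right _ (by positivity)).trans hpoly
      _ ≤ (m ^ D) ^ 2 := h2m.trans (Nat.le_self_pow (by norm_num) _)

theorem fsk_lower_n_two_minus_eps (k s : ℕ) (hs : 3 ≤ s) (hk : s < k)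
    (ε : ℝ) (hε : 0 < ε) :
    ∃ n₀ : ℕ, ∀ n : ℕ, n₀ ≤ n → (n : ℝ) ^ ((2 : ℝ) - ε) ≤ (fsk s k n : ℝ) := by
  -- capping `ε` keeps the exponent `2 - δ` nonnegative
  set δ := min ε 1
  have hδ : 0 < δ := lt_min hε one_pos
  obtain ⟨m, hmδ, hm⟩ : ∃ m : ℕ, 2 * (s : ℝ) ^ 2 ≤ (m : ℝ) ^ δ ∧ 2 ≤ m :=
    (((tendsto_rpow_atTop hδ).comp tendsto_natCast_atTop_atTop).eventually_ge_atTop _).and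
      (Filter.eventually_ge_atTop 2) |>.exists
  obtain ⟨D₀, hD₀⟩ := Filter.eventually_atTop.1
    (eventually_mul_pow_le_two_pow (4 * (m ^ 2 + 1) ^ 5 * (s * m) ^ 2) 5)
  refine ⟨(s * m) ^ (D₀ + 1), fun n hn => ?_⟩
  have hsm : 1 < s * m := by nlinarith
  have hn0 : n ≠ 0 := (Nat.pos_of_ne_zero (by positivity)).trans_le hn |>.ne'
  set D := Nat.log (s * m) n
  have hD : D₀ + 1 ≤ D := (Nat.le_log_iff_pow_le hsm hn0).2 hn
  have hpoly : 4 * (D * m ^ 2 + 1) ^ 5 * (s * m) ^ 2 ≤ 2 ^ D :=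
    calc 4 * (D * m ^ 2 + 1) ^ 5 * (s * m) ^ 2 ≤ 4 * ((m ^ 2 + 1) * D) ^ 5 * (s * m) ^ 2 := by
          gcongr; nlinarith
      _ = 4 * (m ^ 2 + 1) ^ 5 * (s * m) ^ 2 * D ^ 5 := by ring
      _ ≤ 2 ^ D := hD₀ D (by omega)
  calc (n : ℝ) ^ (2 - ε) ≤ (n : ℝ) ^ (2 - δ) :=
        Real.rpow_le_rpow_of_exponent_le (by exact_mod_cast Nat.one_le_iff_ne_zero.2 hn0)
          (by linarith [min_le_left ε 1])
    _ ≤ ⌈(n : ℝ) ^ (2 - δ)⌉₊ := Nat.le_ceil _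
    _ ≤ fsk s k n := by
      exact_mod_cast le_fsk_of_mul_le hs hk (Nat.pow_log_le_self _ hn0)
        (mul_ceil_rpow_le (by omega) hm (by omega) hδ.le (by linarith [min_le_right ε 1]) hmδ
          hpoly (Nat.lt_pow_succ_log_self hsm n))
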